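/- Suppose λ is a Young diagram with n boxes, r(λ), c(λ) ≤ A ≤ n, and σ₁, σ₂ ∈ S_l with π = σ₁σ₂. Then N^λ(σ₁,σ₂) ≤ A^{|C(σ₁)|+|C(σ₂)|} (n/A²)^{orbits(σ₁,σ₂)} ≤ A^{l−|C(π)|} n^{|C(π)|} (1/A)^{o(σ₁,σ₂)}, where orbits(σ₁,σ₂) is the number of orbits of the subgroup ⟨σ₁,σ₂⟩ acting on {1,…,l}, and o(σ₁,σ₂) = l − |C(σ₁)| − |C(σ₂)| + orbits(σ₁,σ₂). -/

import Mathlib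

open scoped Classical
open MeasureTheory ProbabilityTheory

noncomputable section

namespace Paper

/-- `|σ|`: the minimal number of factors needed to write `σ` as a product of transpositions. -/
def permLength {α : Type*} [DecidableEq α] [Fintype α] (σ : Equiv.Perm α) : ℕ :=
  sInf {k | ∃ L : List (Equiv.Perm α), L.length = k ∧ (∀ τ ∈ L, τ.IsSwap) ∧ L.prod = σ}

/-- `r(λ)`: the number of rows of a Young diagram. -/
def rows (μ : YoungDiagram) : ℕ := μ.colLen 0

/-- `c(λ)`: the number of columns of a Young diagram. -/
def cols (μ : YoungDiagram) : ℕ := μ.rowLen 0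

/-- The set of minimal representatives of the cycles (orbits, fixed points included) of `σ`. -/
def cycleReps {l : ℕ} (σ : Equiv.Perm (Fin l)) : Finset (Fin l) :=
  Finset.univ.filter fun m => ∀ x, σ.SameCycle m x → m ≤ x

/-- `|C(σ)|`: the number of cycles (orbits, fixed points included) of `σ`. -/
def cyclesCount {l : ℕ} (σ : Equiv.Perm (Fin l)) : ℕ := (cycleReps σ).card

/-- The multiset of the lengths of all the cycles of `σ` (fixed points included). -/
def fullCycleType {l : ℕ} (σ : Equiv.Perm (Fin l)) : Multiset ℕ :=
  (cycleReps σ).val.map fun m => (Finset.univ.filter fun a => σ.SameCycle m a).card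

/-- `N^λ(σ₁,σ₂)`: the number of colorings of the cycles of `σ₁` (by columns of `λ`, numbered
from 1) and of the cycles of `σ₂` (by rows of `λ`, numbered from 1), compatible with `λ`;
a coloring is encoded as a pair of functions on points, constant on the respective cycles.
Recall that in Mathlib a cell of a Young diagram is a pair (row index, column index),
both 0-based, so the paper's requirement `(h(c₁), h(c₂)) ∈ λ` (column first, 1-based) reads
`(h₂ m - 1, h₁ m - 1) ∈ μ`. -/
def Ncol {l : ℕ} (μ : YoungDiagram) (σ₁ σ₂ : Equiv.Perm (Fin l)) : ℕ :=
  Nat.card {h : (Fin l → ℕ) × (Fin l → ℕ) //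
    (∀ m, h.1 (σ₁ m) = h.1 m) ∧ (∀ m, h.2 (σ₂ m) = h.2 m) ∧
    ∀ m, 1 ≤ h.1 m ∧ 1 ≤ h.2 m ∧ ((h.2 m - 1, h.1 m - 1) : ℕ × ℕ) ∈ μ}

/-- `P_λ`: the permutations preserving each row of `λ` (with respect to the labelling `f`). -/
def youngP {n : ℕ} (μ : YoungDiagram) (f : Fin n ≃ μ.cells) : Finset (Equiv.Perm (Fin n)) :=
  Finset.univ.filter fun σ => ∀ i, ((f (σ i)) : ℕ × ℕ).1 = ((f i) : ℕ × ℕ).1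

/-- `Q_λ`: the permutations preserving each column of `λ` (with respect to the labelling `f`). -/
def youngQ {n : ℕ} (μ : YoungDiagram) (f : Fin n ≃ μ.cells) : Finset (Equiv.Perm (Fin n)) :=
  Finset.univ.filter fun σ => ∀ i, ((f (σ i)) : ℕ × ℕ).2 = ((f i) : ℕ × ℕ).2

/-- `a_λ = Σ_{σ ∈ P_λ} σ` in the group algebra. -/
def aElt {n : ℕ} (μ : YoungDiagram) (f : Fin n ≃ μ.cells) :
    MonoidAlgebra ℂ (Equiv.Perm (Fin n)) :=
  ∑ σ ∈ youngP μ f, MonoidAlgebra.single σ 1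

/-- `b_λ = Σ_{σ ∈ Q_λ} sgn(σ) σ` in the group algebra. -/
def bElt {n : ℕ} (μ : YoungDiagram) (f : Fin n ≃ μ.cells) :
    MonoidAlgebra ℂ (Equiv.Perm (Fin n)) :=
  ∑ σ ∈ youngQ μ f, MonoidAlgebra.single σ ((Equiv.Perm.sign σ : ℤ) : ℂ)

/-- `V_λ = ℂ[S_n] b_λ a_λ`, the left ideal generated by the Young symmetrizer. -/
def youngModule {n : ℕ} (μ : YoungDiagram) (f : Fin n ≃ μ.cells) :
    Submodule ℂ (MonoidAlgebra ℂ (Equiv.Perm (Fin n))) :=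
  LinearMap.range (LinearMap.mulRight ℂ (bElt μ f * aElt μ f))

/-- `ρ^λ(π)`: left multiplication by `π` on `V_λ`. -/
def rho {n : ℕ} (μ : YoungDiagram) (f : Fin n ≃ μ.cells) (π : Equiv.Perm (Fin n)) :
    youngModule μ f →ₗ[ℂ] youngModule μ f :=
  (LinearMap.mulLeft ℂ (MonoidAlgebra.single π (1 : ℂ))).restrict (fun x hx => by
    obtain ⟨y, rfl⟩ := LinearMap.mem_range.mp hx
    exact LinearMap.mem_range.mpr ⟨MonoidAlgebra.single π (1 : ℂ) * y, by
      simp [LinearMap.mulRight_apply, LinearMap.mulLeft_apply, mul_assoc]⟩)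

/-- The normalized character `χ^λ(π) = Tr ρ^λ(π) / Tr ρ^λ(e)`. -/
def chi {n : ℕ} (μ : YoungDiagram) (f : Fin n ≃ μ.cells) (π : Equiv.Perm (Fin n)) : ℂ :=
  LinearMap.trace ℂ (youngModule μ f) (rho μ f π) /
    LinearMap.trace ℂ (youngModule μ f) (rho μ f 1)

/-- The embedding of `S_l` into `S_n` (permutations fixing `l+1,…,n`). -/
def embed {l n : ℕ} (hl : l ≤ n) (π : Equiv.Perm (Fin l)) : Equiv.Perm (Fin n) :=
  π.viaFintypeEmbedding (Fin.castLEEmb hl)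

/-- The normalized character `Σ^λ(π) = (n)_l χ^λ(π)` for `π ∈ S_l`, `l ≤ n`. -/
def normChar {n l : ℕ} (μ : YoungDiagram) (f : Fin n ≃ μ.cells) (hl : l ≤ n)
    (π : Equiv.Perm (Fin l)) : ℂ :=
  (n.descFactorial l : ℂ) * chi μ f (embed hl π)

/-- `ψ(c) = max_{a ∈ c} φ(a)`: the maximum of `φ` over the cycle of `τ` containing `m`. -/
def cycleMax {l r : ℕ} (τ : Equiv.Perm (Fin l)) (φ : Fin l → Fin r) (m : Fin l) : Fin r :=
  ((Finset.univ.filter fun a => τ.SameCycle m a).image φ).max'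
    ⟨φ m, Finset.mem_image_of_mem φ
      (Finset.mem_filter.mpr ⟨Finset.mem_univ m, Equiv.Perm.SameCycle.refl τ m⟩)⟩

/-- The number of orbits of the subgroup `⟨σ₁, σ₂⟩` acting on `{1,…,l}`. -/
def jointOrbits {l : ℕ} (σ₁ σ₂ : Equiv.Perm (Fin l)) : ℕ :=
  Nat.card (MulAction.orbitRel.Quotient (Subgroup.closure {σ₁, σ₂}) (Fin l))

/-- `o(σ₁,σ₂) = l − |C(σ₁)| − |C(σ₂)| + orbits(σ₁,σ₂)` (as an integer). -/
def oStat {l : ℕ} (σ₁ σ₂ : Equiv.Perm (Fin l)) : ℤ :=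
  (l : ℤ) - cyclesCount σ₁ - cyclesCount σ₂ + jointOrbits σ₁ σ₂

/-- The free cumulant `R_{k+1}^λ` of (the transition measure of) `λ`, given by the
combinatorial formula: the sum of `(−1)^{|σ₁|} N^λ(σ₁,σ₂)` over the minimal factorizations
`σ₁σ₂ = (1,2,…,k)` in `S_k`, i.e. those with `|σ₁| + |σ₂| = k − 1`. -/
def freeCumulant (μ : YoungDiagram) (k : ℕ) : ℂ :=
  ∑ p ∈ Finset.univ.filter (fun p : Equiv.Perm (Fin k) × Equiv.Perm (Fin k) =>
      p.1 * p.2 = finRotate k ∧ permLength p.1 + permLength p.2 = k - 1),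
    (-1 : ℂ) ^ permLength p.1 * (Ncol μ p.1 p.2 : ℂ)

/-- `Ñ^λ(σ₁,σ₂)`: the number of injective functions from `{1,…,l}` to the boxes of `λ`
such that the row coordinate is constant on each cycle of `σ₂` and the column coordinate
is constant on each cycle of `σ₁`.  (In Mathlib a cell is (row, column).) -/
def Ntilde {l : ℕ} (μ : YoungDiagram) (σ₁ σ₂ : Equiv.Perm (Fin l)) : ℕ :=
  Nat.card {f : Fin l → μ.cells // Function.Injective f ∧
    (∀ m, ((f (σ₂ m)) : ℕ × ℕ).1 = ((f m) : ℕ × ℕ).1) ∧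
    (∀ m, ((f (σ₁ m)) : ℕ × ℕ).2 = ((f m) : ℕ × ℕ).2)}

/-- `N̂^λ(σ₁,σ₂)`: the number of all functions from `{1,…,l}` to the boxes of `λ`
such that the row coordinate is constant on each cycle of `σ₂` and the column coordinate
is constant on each cycle of `σ₁`. -/
def Nhat {l : ℕ} (μ : YoungDiagram) (σ₁ σ₂ : Equiv.Perm (Fin l)) : ℕ :=
  Nat.card {f : Fin l → μ.cells //
    (∀ m, ((f (σ₂ m)) : ℕ × ℕ).1 = ((f m) : ℕ × ℕ).1) ∧
    (∀ m, ((f (σ₁ m)) : ℕ × ℕ).2 = ((f m) : ℕ × ℕ).2)}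

/-- The number of column inversions of a permutation `σ` of the boxes of `λ`: the number of
pairs of boxes `□₁, □₂` such that `σ(□₁), σ(□₂)` are in the same column, `r(□₁) < r(□₂)` and
`r(σ(□₁)) > r(σ(□₂))`. -/
def invCount (μ : YoungDiagram) (σ : Equiv.Perm μ.cells) : ℕ :=
  (Finset.univ.filter fun bb : (↥μ.cells × ↥μ.cells) =>
    ((σ bb.1 : ℕ × ℕ).2 = (σ bb.2 : ℕ × ℕ).2 ∧ (bb.1 : ℕ × ℕ).1 < (bb.2 : ℕ × ℕ).1 ∧
      (σ bb.2 : ℕ × ℕ).1 < (σ bb.1 : ℕ × ℕ).1)).card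

/-- `(−1)^{inv(σ)}`, set to `0` when two boxes of the same row are mapped by `σ` to boxes
of the same column. -/
def invSign (μ : YoungDiagram) (σ : Equiv.Perm μ.cells) : ℂ :=
  if ∃ b₁ b₂ : μ.cells, b₁ ≠ b₂ ∧ (b₁ : ℕ × ℕ).1 = (b₂ : ℕ × ℕ).1 ∧
      (σ b₁ : ℕ × ℕ).2 = (σ b₂ : ℕ × ℕ).2
  then 0 else (-1 : ℂ) ^ invCount μ σ

/-- The standard complex centered Gaussian distribution, realized as the distribution of
`(x + i y)/√2` with `x, y` independent standard real Gaussians. -/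
def stdComplexGaussian : Measure ℂ :=
  ((gaussianReal 0 1).prod (gaussianReal 0 1)).map
    fun p => ((p.1 : ℂ) + (p.2 : ℂ) * Complex.I) / (Real.sqrt 2 : ℂ)

/-- The random matrix `T_λ` built from the family of entries `t`. -/
def matOf {N : ℕ} {Ω : Type*} (t : Fin N → Fin N → Ω → ℂ) (ω : Ω) :
    Matrix (Fin N) (Fin N) ℂ :=
  Matrix.of fun i j => t i j ω

/-- The hypotheses on the entries of the random matrix `T_λ`: independent entries, standard
complex Gaussian on the boxes of `λ` and zero outside.  The matrix entry `t i j` (0-based)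
corresponds to the box in column `i+1` and row `j+1` of `λ` (the paper's `(i,j) ∈ λ` with the
French convention), i.e. to the Mathlib cell `(j, i)`. -/
structure IsGaussianOn {N : ℕ} {Ω : Type*} [MeasureSpace Ω]
    (t : Fin N → Fin N → Ω → ℂ) (μ : YoungDiagram) : Prop where
  prob : IsProbabilityMeasure (volume : Measure Ω)
  meas : ∀ i j, Measurable (t i j)
  indep : iIndepFun (fun ij : Fin N × Fin N => t ij.1 ij.2) volume
  gauss : ∀ i j : Fin N, (((j : ℕ), (i : ℕ)) : ℕ × ℕ) ∈ μ →
    Measure.map (t i j) volume = stdComplexGaussian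
  zero : ∀ i j : Fin N, (((j : ℕ), (i : ℕ)) : ℕ × ℕ) ∉ μ → t i j = 0

/-! ### Bipartite graphs -/

/-- The simple graph on `C₁ ⊕ C₂` associated to a bipartite edge set `E ⊆ C₁ × C₂`. -/
def bipGraph {C₁ C₂ : Type*} (E : Finset (C₁ × C₂)) : SimpleGraph (C₁ ⊕ C₂) where
  Adj x y := (∃ a b, (a, b) ∈ E ∧ x = Sum.inl a ∧ y = Sum.inr b) ∨
             (∃ a b, (a, b) ∈ E ∧ x = Sum.inr b ∧ y = Sum.inl a)
  symm := by
    constructor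
    rintro x y (⟨a, b, h, rfl, rfl⟩ | ⟨a, b, h, rfl, rfl⟩)
    · exact Or.inr ⟨a, b, h, rfl, rfl⟩
    · exact Or.inl ⟨a, b, h, rfl, rfl⟩
  loopless := by
    constructor
    rintro x (⟨a, b, h, rfl, h2⟩ | ⟨a, b, h, rfl, h2⟩)
    · exact Sum.inl_ne_inr h2
    · exact Sum.inr_ne_inl h2

/-- The degree of a left vertex in the bipartite edge set `E`. -/
def degL {C₁ C₂ : Type*} (E : Finset (C₁ × C₂)) (a : C₁) : ℕ :=
  (E.filter fun e => e.1 = a).card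

/-- The degree of a right vertex in the bipartite edge set `E`. -/
def degR {C₁ C₂ : Type*} (E : Finset (C₁ × C₂)) (b : C₂) : ℕ :=
  (E.filter fun e => e.2 = b).card

/-- `E'` is a disjoint union of complete bipartite graphs of the form `G_{1,1}`, `G_{k,1}`,
`G_{1,k}` covering all the vertices: every vertex has nonzero degree and every edge has an
endpoint of degree one (i.e. every connected component is a star). -/
def IsStarDecomposition {C₁ C₂ : Type*} (E' : Finset (C₁ × C₂)) : Prop :=
  (∀ a, 0 < degL E' a) ∧ (∀ b, 0 < degR E' b) ∧
    ∀ e ∈ E', degL E' e.1 = 1 ∨ degR E' e.2 = 1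

/-- `N^λ(G)`: the number of colorings of the vertices of the bipartite graph with edge set `E`
(left vertices colored by columns of `λ`, right vertices by rows of `λ`, numbered from 1)
compatible with `λ`. -/
def NcolG {C₁ C₂ : Type*} (μ : YoungDiagram) (E : Finset (C₁ × C₂)) : ℕ :=
  Nat.card {h : (C₁ → ℕ) × (C₂ → ℕ) //
    ∀ e ∈ E, 1 ≤ h.1 e.1 ∧ 1 ≤ h.2 e.2 ∧ ((h.2 e.2 - 1, h.1 e.1 - 1) : ℕ × ℕ) ∈ μ}


/-! A compatible coloring is a pair of functions on the cycles of `σ₁` and of `σ₂`. In every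
orbit of `⟨σ₁, σ₂⟩` choose a point `x`: the colors of the two cycles through `x` are the
coordinates of one box of `λ` (at most `n` choices), every other cycle of `σ₁` gets a column
(at most `c(λ)` choices) and every other cycle of `σ₂` a row (at most `r(λ)` choices). Hence
`N^λ(σ₁,σ₂) ≤ n^orbits c(λ)^(|C(σ₁)| - orbits) r(λ)^(|C(σ₂)| - orbits)`, which gives the first
bound. The second bound amounts to `(n/A)^(|C(π)| - orbits) ≥ 1`: each cycle of `π = σ₁σ₂`
lies in an orbit, so `orbits ≤ |C(π)|`. -/

theorem _root_.Equiv.Perm.SameCycle.apply_eq_of_invariant {α β : Type*} {σ : Equiv.Perm α}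
    {f : α → β} (hf : ∀ x, f (σ x) = f x) {x y : α} (h : σ.SameCycle x y) : f x = f y := by
  obtain ⟨i, rfl⟩ := h
  induction i using Int.induction_on generalizing x with
  | zero => rfl
  | succ i ih => rw [zpow_add_one, Equiv.Perm.mul_apply, ← ih, hf]
  | pred i ih =>
    rw [zpow_sub_one, Equiv.Perm.mul_apply, ← ih, ← hf (σ⁻¹ x)]
    exact congrArg f (σ.apply_symm_apply x).symm

section Quotients

variable {α : Type*}

theorem injective_mk_out_of_le {r₁ r : Setoid α} (h : r₁ ≤ r) :
    Function.Injective fun q : Quotient r => Quotient.mk r₁ q.out := fun _ _ hq =>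
  Quotient.out_equiv_out.mp (h (Quotient.exact hq))

theorem card_quotient_le_of_le [Finite α] {r₁ r : Setoid α} (h : r₁ ≤ r) :
    Nat.card (Quotient r) ≤ Nat.card (Quotient r₁) :=
  Nat.card_le_card_of_injective _ (injective_mk_out_of_le h)

theorem card_eq_card_quotient_of_mem_iff [LinearOrder α] [WellFoundedLT α] {r : Setoid α}
    {s : Finset α} (hs : ∀ m, m ∈ s ↔ ∀ x, r m x → m ≤ x) :
    s.card = Nat.card (Quotient r) := by
  rw [← Nat.card_eq_finsetCard]
  refine Nat.card_eq_of_bijective (fun m : s => Quotient.mk r m) ⟨?_, ?_⟩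
  · rintro ⟨m, hm⟩ ⟨m', hm'⟩ h
    have hmm' : r m m' := Quotient.exact h
    exact Subtype.ext (le_antisymm ((hs m).mp hm m' hmm') ((hs m').mp hm' m (r.symm hmm')))
  · rintro ⟨x⟩
    obtain ⟨m, hxm, hmin⟩ := WellFounded.has_min wellFounded_lt {y | r x y} ⟨x, r.refl x⟩
    refine ⟨⟨m, (hs m).mpr fun y hmy => not_lt.mp fun hym => hmin y (r.trans hxm hmy) hym⟩, ?_⟩
    exact Quotient.sound (r.symm hxm)

end Quotients

theorem lt_cols_of_mem {μ : YoungDiagram} {i j : ℕ} (h : (i, j) ∈ μ) : j < cols μ :=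
  (YoungDiagram.mem_iff_lt_rowLen.mp h).trans_le (μ.rowLen_anti 0 i i.zero_le)

theorem lt_rows_of_mem {μ : YoungDiagram} {i j : ℕ} (h : (i, j) ∈ μ) : i < rows μ :=
  (YoungDiagram.mem_iff_lt_colLen.mp h).trans_le (μ.colLen_anti 0 j j.zero_le)

section Colorings

variable {α : Type*}

/-- `g.1` colors the classes of `r₁` by columns and `g.2` those of `r₂` by rows; unlike in
`Ncol`, colors are numbered from 0. -/
def Coloring (μ : YoungDiagram) (r₁ r₂ : Setoid α) : Type _ :=
  {g : (Quotient r₁ → ℕ) × (Quotient r₂ → ℕ) //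
    ∀ x, (g.2 (Quotient.mk _ x), g.1 (Quotient.mk _ x)) ∈ μ}

theorem Coloring.fst_lt_cols {μ : YoungDiagram} {r₁ r₂ : Setoid α} (g : Coloring μ r₁ r₂)
    (c : Quotient r₁) : g.1.1 c < cols μ :=
  lt_cols_of_mem (by simpa using g.2 c.out)

theorem Coloring.snd_lt_rows {μ : YoungDiagram} {r₁ r₂ : Setoid α} (g : Coloring μ r₁ r₂)
    (c : Quotient r₂) : g.1.2 c < rows μ :=
  lt_rows_of_mem (by simpa using g.2 c.out)

instance [Finite α] {μ : YoungDiagram} {r₁ r₂ : Setoid α} : Finite (Coloring μ r₁ r₂) :=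
  Finite.of_injective
    (fun g => (fun c => (⟨g.1.1 c, g.fst_lt_cols c⟩ : Fin (cols μ)),
      fun c => (⟨g.1.2 c, g.snd_lt_rows c⟩ : Fin (rows μ))))
    fun g g' h => by
      simp only [Prod.mk.injEq, funext_iff, Fin.ext_iff] at h
      exact Subtype.ext (Prod.ext (funext h.1) (funext h.2))

theorem eq_of_forall_range_of_forall_compl {β γ δ : Type*} {ι : β → γ} {f g : γ → δ}
    (h : ∀ q, f (ι q) = g (ι q)) (hc : ∀ c : ↥(Set.range ι)ᶜ, f c = g c) : f = g := by
  funext c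
  by_cases hcι : c ∈ Set.range ι
  · obtain ⟨q, rfl⟩ := hcι
    exact h q
  · exact hc ⟨c, hcι⟩

theorem card_compl_range_of_injective {β γ : Type*} [Finite γ] {ι : β → γ}
    (hι : Function.Injective ι) : Nat.card ↥(Set.range ι)ᶜ = Nat.card γ - Nat.card β := by
  rw [Nat.card_coe_set_eq, Set.ncard_compl, Set.ncard_range_of_injective hι]

theorem card_coloring_le [Finite α] (μ : YoungDiagram) {r₁ r₂ r : Setoid α} (h₁ : r₁ ≤ r)
    (h₂ : r₂ ≤ r) :
    Nat.card (Coloring μ r₁ r₂) ≤ μ.card ^ Nat.card (Quotient r) *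
      (cols μ ^ (Nat.card (Quotient r₁) - Nat.card (Quotient r)) *
        rows μ ^ (Nat.card (Quotient r₂) - Nat.card (Quotient r))) := by
  set ι₁ := fun q : Quotient r => Quotient.mk r₁ q.out
  set ι₂ := fun q : Quotient r => Quotient.mk r₂ q.out
  let Φ : Coloring μ r₁ r₂ → (Quotient r → μ.cells) ×
      ((↥(Set.range ι₁)ᶜ → Fin (cols μ)) × (↥(Set.range ι₂)ᶜ → Fin (rows μ))) := fun g =>
    (fun q => ⟨(g.1.2 (ι₂ q), g.1.1 (ι₁ q)), (YoungDiagram.mem_cells _).mpr (g.2 q.out)⟩,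
      fun c => ⟨g.1.1 c, g.fst_lt_cols c⟩, fun c => ⟨g.1.2 c, g.snd_lt_rows c⟩)
  have hΦ : Function.Injective Φ := by
    rintro ⟨⟨g₁, g₂⟩, hg⟩ ⟨⟨g₁', g₂'⟩, hg'⟩ h
    simp only [Φ, Prod.mk.injEq, funext_iff, Subtype.ext_iff, Fin.ext_iff] at h
    obtain ⟨hcell, hcol, hrow⟩ := h
    congr 2
    exacts [eq_of_forall_range_of_forall_compl (fun q => (hcell q).2) hcol,
      eq_of_forall_range_of_forall_compl (fun q => (hcell q).1) hrow]
  calc Nat.card (Coloring μ r₁ r₂) ≤ _ := Nat.card_le_card_of_injective Φ hΦ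
    _ = _ := by
      rw [Nat.card_prod, Nat.card_prod, Nat.card_fun, Nat.card_fun, Nat.card_fun,
        Nat.card_fin, Nat.card_fin, Nat.card_eq_finsetCard,
        card_compl_range_of_injective (ι := ι₁) (injective_mk_out_of_le h₁),
        card_compl_range_of_injective (ι := ι₂) (injective_mk_out_of_le h₂)]

end Colorings

section Permutations

open Equiv Equiv.Perm

variable {l : ℕ}

theorem cyclesCount_eq_card_quotient (σ : Perm (Fin l)) :
    cyclesCount σ = Nat.card (Quotient (SameCycle.setoid σ)) :=
  card_eq_card_quotient_of_mem_iff fun m => by simp [cycleReps]; rfl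

theorem cyclesCount_le (σ : Perm (Fin l)) : cyclesCount σ ≤ l :=
  (Finset.card_le_univ _).trans_eq (Fintype.card_fin l)

theorem cyclesCount_pos [NeZero l] (σ : Perm (Fin l)) : 0 < cyclesCount σ :=
  Finset.card_pos.mpr ⟨0, by simp [cycleReps]⟩

theorem sameCycle_setoid_le_orbitRel {α : Type*} {G : Subgroup (Perm α)} {τ : Perm α}
    (hτ : τ ∈ G) : SameCycle.setoid τ ≤ MulAction.orbitRel G α := by
  rintro x y ⟨i, hi⟩
  exact (MulAction.orbitRel G α).symm ⟨⟨τ ^ i, G.zpow_mem hτ i⟩, hi⟩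

theorem jointOrbits_le_cyclesCount {σ₁ σ₂ τ : Perm (Fin l)}
    (hτ : τ ∈ Subgroup.closure {σ₁, σ₂}) : jointOrbits σ₁ σ₂ ≤ cyclesCount τ :=
  cyclesCount_eq_card_quotient τ ▸ card_quotient_le_of_le (sameCycle_setoid_le_orbitRel hτ)

theorem Ncol_le_card_coloring (μ : YoungDiagram) (σ₁ σ₂ : Perm (Fin l)) :
    Ncol μ σ₁ σ₂ ≤ Nat.card (Coloring μ (SameCycle.setoid σ₁) (SameCycle.setoid σ₂)) := by
  refine Nat.card_le_card_of_injective
    (fun h => ⟨(Quotient.lift (fun x => h.1.1 x - 1)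
        fun _ _ hxy => congrArg (· - 1) (hxy.apply_eq_of_invariant h.2.1),
      Quotient.lift (fun x => h.1.2 x - 1)
        fun _ _ hxy => congrArg (· - 1) (hxy.apply_eq_of_invariant h.2.2.1)),
      fun x => (h.2.2.2 x).2.2⟩) ?_
  intro h h' heq
  have e₁ x : h.1.1 x - 1 = h'.1.1 x - 1 := congrArg (fun g => g.1.1 (Quotient.mk _ x)) heq
  have e₂ x : h.1.2 x - 1 = h'.1.2 x - 1 := congrArg (fun g => g.1.2 (Quotient.mk _ x)) heq
  refine Subtype.ext (Prod.ext (funext fun x => ?_) (funext fun x => ?_))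
  exacts [Nat.sub_one_cancel (h.2.2.2 x).1 (h'.2.2.2 x).1 (e₁ x),
    Nat.sub_one_cancel (h.2.2.2 x).2.1 (h'.2.2.2 x).2.1 (e₂ x)]

theorem jointOrbits_le_cyclesCount_left (σ₁ σ₂ : Perm (Fin l)) :
    jointOrbits σ₁ σ₂ ≤ cyclesCount σ₁ :=
  jointOrbits_le_cyclesCount (Subgroup.subset_closure (Set.mem_insert _ _))

theorem jointOrbits_le_cyclesCount_right (σ₁ σ₂ : Perm (Fin l)) :
    jointOrbits σ₁ σ₂ ≤ cyclesCount σ₂ :=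
  jointOrbits_le_cyclesCount (Subgroup.subset_closure (Set.mem_insert_of_mem _ rfl))

theorem Ncol_le_card_pow (μ : YoungDiagram) (σ₁ σ₂ : Perm (Fin l)) :
    Ncol μ σ₁ σ₂ ≤ μ.card ^ jointOrbits σ₁ σ₂ *
      (cols μ ^ (cyclesCount σ₁ - jointOrbits σ₁ σ₂) *
        rows μ ^ (cyclesCount σ₂ - jointOrbits σ₁ σ₂)) := by
  rw [cyclesCount_eq_card_quotient, cyclesCount_eq_card_quotient]
  exact (Ncol_le_card_coloring μ σ₁ σ₂).trans (card_coloring_le μ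
    (sameCycle_setoid_le_orbitRel (Subgroup.subset_closure (Set.mem_insert _ _)))
    (sameCycle_setoid_le_orbitRel (Subgroup.subset_closure (Set.mem_insert_of_mem _ rfl))))

theorem Ncol_eq_zero_of_rows_eq_zero [NeZero l] {μ : YoungDiagram} (hμ : rows μ = 0)
    (σ₁ σ₂ : Perm (Fin l)) : Ncol μ σ₁ σ₂ = 0 :=
  Nat.card_eq_zero.mpr (Or.inl ⟨fun h => by simpa [hμ] using lt_rows_of_mem (h.2.2.2 0).2.2⟩)

theorem Ncol_le_pow_mul_div_sq_pow {μ : YoungDiagram} {A : ℝ} (hA : 0 < A)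
    (hA₁ : (rows μ : ℝ) ≤ A) (hA₂ : (cols μ : ℝ) ≤ A) (σ₁ σ₂ : Perm (Fin l)) :
    (Ncol μ σ₁ σ₂ : ℝ) ≤
      A ^ (cyclesCount σ₁ + cyclesCount σ₂) * ((μ.card : ℝ) / A ^ 2) ^ jointOrbits σ₁ σ₂ := by
  have ho₁ := jointOrbits_le_cyclesCount_left σ₁ σ₂
  have ho₂ := jointOrbits_le_cyclesCount_right σ₁ σ₂
  set o := jointOrbits σ₁ σ₂
  set c₁ := cyclesCount σ₁
  set c₂ := cyclesCount σ₂
  calc (Ncol μ σ₁ σ₂ : ℝ) ≤ μ.card ^ o * ((cols μ : ℝ) ^ (c₁ - o) * (rows μ : ℝ) ^ (c₂ - o)) := by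
        exact_mod_cast Ncol_le_card_pow μ σ₁ σ₂
    _ ≤ μ.card ^ o * (A ^ (c₁ - o) * A ^ (c₂ - o)) := by gcongr
    _ = A ^ (c₁ + c₂) * ((μ.card : ℝ) / A ^ 2) ^ o := by
        rw [show c₁ + c₂ = (c₁ - o) + (c₂ - o) + 2 * o by omega, pow_add, pow_add, div_pow,
          pow_mul]
        field_simp

end Permutations

theorem pow_mul_div_sq_pow_le {A n : ℝ} (hA : 0 < A) (hAn : A ≤ n) {c₁ c₂ o p l : ℕ}
    (ho : o ≤ p) (hp : p ≤ l) :
    A ^ (c₁ + c₂) * (n / A ^ 2) ^ o ≤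
      A ^ (l - p) * n ^ p * (1 / A) ^ ((l : ℤ) - c₁ - c₂ + o) := by
  obtain ⟨d, rfl⟩ := Nat.exists_eq_add_of_le ho
  obtain ⟨e, rfl⟩ := Nat.exists_eq_add_of_le hp
  have hn : 0 < n := hA.trans_le hAn
  have hexp : ((o + d + e : ℕ) : ℤ) - c₁ - c₂ + o = ((2 * o + d + e : ℕ) : ℤ) - (c₁ + c₂ : ℕ) := by
    push_cast
    ring
  rw [Nat.add_sub_cancel_left, hexp, zpow_sub₀ (by positivity), zpow_natCast, zpow_natCast]
  calc A ^ (c₁ + c₂) * (n / A ^ 2) ^ o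
      ≤ A ^ (c₁ + c₂) * (n / A ^ 2) ^ o * (n / A) ^ d :=
        le_mul_of_one_le_right (by positivity) (one_le_pow₀ ((one_le_div hA).mpr hAn))
    _ = A ^ e * n ^ (o + d) * ((1 / A) ^ (2 * o + d + e) / (1 / A) ^ (c₁ + c₂)) := by
        simp only [pow_add, pow_mul, div_pow, one_pow]
        field_simp

theorem Ncol_estimate (μ : YoungDiagram) (n : ℕ) (hcard : μ.card = n) (A : ℝ)
    (hA₁ : (rows μ : ℝ) ≤ A) (hA₂ : (cols μ : ℝ) ≤ A) (hAn : A ≤ n)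
    (l : ℕ) (σ₁ σ₂ π : Equiv.Perm (Fin l)) (hπ : σ₁ * σ₂ = π) :
    (Ncol μ σ₁ σ₂ : ℝ) ≤
        A ^ (cyclesCount σ₁ + cyclesCount σ₂) * ((n : ℝ) / A ^ 2) ^ jointOrbits σ₁ σ₂ ∧
      A ^ (cyclesCount σ₁ + cyclesCount σ₂) * ((n : ℝ) / A ^ 2) ^ jointOrbits σ₁ σ₂ ≤
        A ^ (l - cyclesCount π) * (n : ℝ) ^ cyclesCount π * (1 / A) ^ oStat σ₁ σ₂ := by
  subst hcard
  rcases ((Nat.cast_nonneg _).trans hA₁).eq_or_lt with rfl | hA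
  · have hrows : rows μ = 0 := by exact_mod_cast le_antisymm hA₁ (Nat.cast_nonneg _)
    rcases Nat.eq_zero_or_pos l with rfl | hl
    · have hc (σ : Equiv.Perm (Fin 0)) : cyclesCount σ = 0 := Nat.le_zero.mp (cyclesCount_le σ)
      have ho : jointOrbits σ₁ σ₂ = 0 :=
        Nat.le_zero.mp ((jointOrbits_le_cyclesCount_left σ₁ σ₂).trans_eq (hc σ₁))
      have hN := Ncol_le_card_pow μ σ₁ σ₂
      simp_all [oStat]
    · have : NeZero l := ⟨hl.ne'⟩
      rw [Ncol_eq_zero_of_rows_eq_zero hrows, Nat.cast_zero,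
        zero_pow (Nat.add_pos_left (cyclesCount_pos σ₁) _).ne', zero_mul]
      exact ⟨le_rfl, by positivity⟩
  · have hπG : π ∈ Subgroup.closure {σ₁, σ₂} :=
      hπ ▸ mul_mem (Subgroup.subset_closure (Set.mem_insert _ _))
        (Subgroup.subset_closure (Set.mem_insert_of_mem _ rfl))
    exact ⟨Ncol_le_pow_mul_div_sq_pow hA hA₁ hA₂ σ₁ σ₂,
      pow_mul_div_sq_pow_le hA hAn (jointOrbits_le_cyclesCount hπG) (cyclesCount_le π)⟩

end Paper
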